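/- arXiv:2503.02176 — 4 statements merged into one kernel-verified Lean document; each statement's English description precedes it below -/
import Mathlib

section
/- Let q be an odd prime, let ℓ ≥ 1 be an integer with 2^ℓ < q/2, and let s be the unique integer in [−q/2, q/2) with s·2^ℓ ≡ 1 (mod q). Then for every integer m with |⌊m/2^ℓ⌉| < q/2, one has (s·(m − (m mod 2^ℓ))) mod q = ⌊m/2^ℓ⌉, where all residues are centered residues. -/
/-!
Subtracting the centered residue modulo `2^ℓ` rounds exactly: `m - (m mod 2^ℓ) = ⌊m/2^ℓ⌉ · 2^ℓ`.
Multiplying by the inverse `s` of `2^ℓ` therefore gives `⌊m/2^ℓ⌉` modulo `q`, and an integer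
already in `[-q/2, q/2)` is its own centered residue.
-/

/-- The centered residue of `a` modulo `q`: `a mod q := a - ⌊(a + q/2)/q⌋ * q`,
the unique integer in `[-q/2, q/2)` congruent to `a` modulo `q`. -/
def cmod (a q : ℤ) : ℤ := a - ⌊((a : ℚ) + (q : ℚ) / 2) / (q : ℚ)⌋ * q

theorem cmod_eq_of_modEq {a b q : ℤ} (hq : 0 < q) (h : a ≡ b [ZMOD q])
    (hb_lb : -(q : ℚ) / 2 ≤ b) (hb_ub : (b : ℚ) < q / 2) : cmod a q = b := by
  obtain ⟨j, hj⟩ : q ∣ a - b := h.symm.dvd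
  have hq' : (0 : ℚ) < q := by exact_mod_cast hq
  have ha : (a : ℚ) = b + q * j := by rw [← sub_eq_iff_eq_add']; exact_mod_cast hj
  have hfloor : ⌊((a : ℚ) + q / 2) / q⌋ = j := by
    rw [Int.floor_eq_iff, le_div_iff₀ hq', div_lt_iff₀ hq', ha]
    constructor <;> linarith
  rw [cmod, hfloor]
  linarith

theorem sub_cmod_eq_round_mul (a t : ℤ) (ht : 0 < t) :
    a - cmod a t = round ((a : ℚ) / t) * t := by
  have ht' : (t : ℚ) ≠ 0 := by exact_mod_cast ht.ne'
  have harg : ((a : ℚ) + t / 2) / t = a / t + 1 / 2 := by field_simp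
  rw [cmod, harg, round_eq]
  ring

theorem stmt_1_general (q : ℤ) (ℓ : ℕ) (hℓq : (2 : ℚ) ^ ℓ < (q : ℚ) / 2) (s : ℤ)
    (hs_inv : s * 2 ^ ℓ ≡ 1 [ZMOD q])
    (m : ℤ) (hm : |(round ((m : ℚ) / 2 ^ ℓ) : ℚ)| < (q : ℚ) / 2) :
    cmod (s * (m - cmod m (2 ^ ℓ))) q = round ((m : ℚ) / 2 ^ ℓ) := by
  have hq : 0 < q := by
    have : (0 : ℚ) < q := by linarith [(by positivity : (0 : ℚ) < 2 ^ ℓ)]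
    exact_mod_cast this
  set k := round ((m : ℚ) / 2 ^ ℓ)
  have hround : m - cmod m (2 ^ ℓ) = k * 2 ^ ℓ := by
    simpa using sub_cmod_eq_round_mul m (2 ^ ℓ) (by positivity)
  have hcong : s * (k * 2 ^ ℓ) ≡ k [ZMOD q] := by
    simpa [mul_assoc, mul_comm k] using hs_inv.mul_right k
  obtain ⟨hk_lb, hk_ub⟩ := abs_lt.mp hm
  rw [hround]
  exact cmod_eq_of_modEq hq hcong (by linarith) hk_ub

/-- Let `q` be an odd prime, `ℓ ≥ 1` with `2^ℓ < q/2`, and let `s` be the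
(unique) integer in `[−q/2, q/2)` with `s·2^ℓ ≡ 1 (mod q)`.  Then for every integer `m`
with `|⌊m/2^ℓ⌉| < q/2`, one has `(s·(m − (m mod 2^ℓ))) mod q = ⌊m/2^ℓ⌉`,
where all residues are centered residues. -/
theorem stmt_1 (q : ℤ) (hq : Prime q) (hodd : Odd q)
    (ℓ : ℕ) (hℓ : 1 ≤ ℓ) (hℓq : (2 : ℚ) ^ ℓ < (q : ℚ) / 2)
    (s : ℤ) (hs_lb : -(q : ℚ) / 2 ≤ (s : ℚ)) (hs_ub : (s : ℚ) < (q : ℚ) / 2)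
    (hs_inv : s * 2 ^ ℓ ≡ 1 [ZMOD q])
    (m : ℤ) (hm : |(round ((m : ℚ) / 2 ^ ℓ) : ℚ)| < (q : ℚ) / 2) :
    cmod (s * (m - cmod m (2 ^ ℓ))) q = round ((m : ℚ) / 2 ^ ℓ) :=
  stmt_1_general q ℓ hℓq s hs_inv m hm
end

section
/- (Correctness of the truncation protocol, Lemma 1.) Let q be an odd prime, let λ, ℓ, κ be positive integers with κ = ⌊log₂ q⌋ − λ − 1 and κ > ℓ, and let s be the unique integer in [−q/2, q/2) with s·2^ℓ ≡ 1 (mod q). Then for all integers m ∈ [−2^{κ−1}, 2^{κ−1}), r ∈ [−2^{κ−ℓ+λ−1}, 2^{κ−ℓ+λ−1}), and r' ∈ [−2^{ℓ−1}, 2^{ℓ−1}), setting m_r := (m + 2^ℓ r + r' + 2^{ℓ−1}) mod q, there exists w ∈ {−1, 0, 1} such that (s·(m + r' − ((m_r − 2^{ℓ−1}) mod 2^ℓ))) mod q = ⌊m/2^ℓ⌉ + w, where all residues are centered residues. -/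
theorem abs_round_add_sub_round_le {α : Type*} [Field α] [LinearOrder α] [IsStrictOrderedRing α]
    [FloorRing α] (x : α) {d : α} (hd : |d| ≤ 1) : |round (x + d) - round x| ≤ 1 := by
  obtain ⟨hd₁, hd₂⟩ := abs_le.mp hd
  have hlt : ((round (x + d) - round x : ℤ) : α) < 2 := by
    push_cast; linarith [round_le_add_half (x + d), sub_half_lt_round x]
  have hgt : (-2 : α) < ((round (x + d) - round x : ℤ) : α) := by
    push_cast; linarith [round_le_add_half x, sub_half_lt_round (x + d)]
  have : round (x + d) - round x < 2 := by exact_mod_cast hlt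
  have : -2 < round (x + d) - round x := by exact_mod_cast hgt
  rw [abs_le]; omega

theorem cmod_eq_sub_round_mul (a q : ℤ) : cmod a q = a - round ((a : ℚ) / q) * q := by
  rcases eq_or_ne q 0 with rfl | hq
  · simp [cmod]
  · rw [cmod, round_eq]
    congr 3
    field_simp

theorem cmod_congr {a b q : ℤ} (h : a ≡ b [ZMOD q]) : cmod a q = cmod b q := by
  obtain ⟨k, hk⟩ := h.dvd
  rcases eq_or_ne q 0 with rfl | hq
  · simp_all
  · have hb : ((b : ℤ) : ℚ) / q = (a : ℚ) / q + k := by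
      rw [eq_add_of_sub_eq' hk]; push_cast; field_simp
    rw [cmod_eq_sub_round_mul, cmod_eq_sub_round_mul, hb, round_add_intCast,
      eq_add_of_sub_eq' hk]
    ring

theorem two_mul_cmod_mem_Ico (a : ℤ) {q : ℤ} (hq : 0 < q) : 2 * cmod a q ∈ Set.Ico (-q) q := by
  have hq' : (0 : ℚ) < q := by exact_mod_cast hq
  have key : ((2 * cmod a q : ℤ) : ℚ) = 2 * ((a : ℚ) / q - round ((a : ℚ) / q)) * q := by
    rw [cmod_eq_sub_round_mul]; push_cast; field_simp
  have h₁ := sub_half_lt_round ((a : ℚ) / q)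
  have h₂ := round_le_add_half ((a : ℚ) / q)
  constructor
  · have : ((-q : ℤ) : ℚ) ≤ ((2 * cmod a q : ℤ) : ℚ) := by rw [key]; push_cast; nlinarith
    exact_mod_cast this
  · have : ((2 * cmod a q : ℤ) : ℚ) < ((q : ℤ) : ℚ) := by rw [key]; nlinarith
    exact_mod_cast this

theorem cmod_eq_self {a q : ℤ} (h : 2 * a ∈ Set.Ico (-q) q) : cmod a q = a := by
  obtain ⟨h₁, h₂⟩ := h
  have hq : (0 : ℚ) < q := by exact_mod_cast (show 0 < q by omega)
  have hround : round ((a : ℚ) / q) = 0 := by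
    rw [round_eq_zero_iff, Set.mem_Ico, le_div_iff₀ hq, div_lt_iff₀ hq]
    constructor
    · have : ((-q : ℤ) : ℚ) ≤ ((2 * a : ℤ) : ℚ) := by exact_mod_cast h₁
      push_cast at this; linarith
    · have : ((2 * a : ℤ) : ℚ) < ((q : ℤ) : ℚ) := by exact_mod_cast h₂
      push_cast at this; linarith
  simp [cmod_eq_sub_round_mul, hround]

theorem exists_truncation_eq_round_add {q L h K R s m r r' : ℤ} (hL : L = 2 * h) (hh : 0 < h)
    (hq : 2 * (K + L * R) ≤ q) (hs : s * L ≡ 1 [ZMOD q])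
    (hm₁ : -K ≤ m) (hm₂ : m < K) (hr₁ : -R ≤ r) (hr₂ : r < R) (hr'₁ : -h ≤ r') (hr'₂ : r' < h) :
    ∃ w ∈ ({-1, 0, 1} : Set ℤ),
      cmod (s * (m + r' - cmod (cmod (m + L * r + r' + h) q - h) L)) q
        = round ((m : ℚ) / L) + w := by
  have hL₀ : 0 < L := by omega
  set u := round (((m + r' : ℤ) : ℚ) / L)
  have hLr₁ : L * -R ≤ L * r := mul_le_mul_of_nonneg_left hr₁ hL₀.le
  have hLr₂ : L * r ≤ L * (R - 1) := mul_le_mul_of_nonneg_left (by omega) hL₀.le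
  have hmasked : cmod (m + L * r + r' + h) q = m + L * r + r' + h := by
    apply cmod_eq_self
    constructor <;> linarith
  have hunmasked : cmod (m + L * r + r' + h - h) L = cmod (m + r') L :=
    cmod_congr (Int.modEq_iff_dvd.mpr ⟨-r, by ring⟩)
  have htrunc : m + r' - cmod (m + r') L = L * u := by rw [cmod_eq_sub_round_mul]; ring
  have hdecrypt : cmod (s * (L * u)) q = u := by
    refine (cmod_congr (b := u) (by simpa [mul_assoc] using hs.mul_right u)).trans
      (cmod_eq_self ?_)
    obtain ⟨ht₁, ht₂⟩ := two_mul_cmod_mem_Ico (m + r') hL₀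
    have hLu : |L * u| < K + L := abs_lt.mpr ⟨by omega, by omega⟩
    have hu : |u| ≤ |L * u| := by
      rw [abs_mul]; exact le_mul_of_one_le_left (abs_nonneg u) (by rw [abs_of_pos hL₀]; omega)
    have hLR : L ≤ L * R := le_mul_of_one_le_right hL₀.le (by omega)
    obtain ⟨hu₁, hu₂⟩ := abs_lt.mp (hu.trans_lt hLu)
    constructor <;> omega
  refine ⟨u - round ((m : ℚ) / L), ?_, by rw [hmasked, hunmasked, htrunc, hdecrypt]; ring⟩
  have hr'L : |(r' : ℚ) / L| ≤ 1 := by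
    rw [abs_div, div_le_one (by positivity)]
    exact_mod_cast (abs_le_abs (by omega) (by omega) : |r'| ≤ |L|)
  have hshift : ((m + r' : ℤ) : ℚ) / L = m / L + r' / L := by push_cast; ring
  have hw : |u - round ((m : ℚ) / L)| ≤ 1 := by
    rw [show u = round ((m : ℚ) / L + r' / L) by rw [← hshift]]
    exact abs_round_add_sub_round_le _ hr'L
  rcases Int.abs_le_one_iff.mp hw with hw | hw | hw <;> simp [hw]

theorem stmt_3_general (q : ℕ)
    (lam ℓ κ : ℕ) (hlam : 1 ≤ lam) (hℓ : 1 ≤ ℓ)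
    (hκ : κ + lam + 1 = Nat.log 2 q) (hκℓ : ℓ < κ)
    (s : ℤ)
    (hs_inv : s * 2 ^ ℓ ≡ 1 [ZMOD (q : ℤ)])
    (m r r' : ℤ)
    (hm1 : -2 ^ (κ - 1) ≤ m) (hm2 : m < 2 ^ (κ - 1))
    (hr1 : -2 ^ (κ - ℓ + lam - 1) ≤ r) (hr2 : r < 2 ^ (κ - ℓ + lam - 1))
    (hr'1 : -2 ^ (ℓ - 1) ≤ r') (hr'2 : r' < 2 ^ (ℓ - 1)) :
    ∃ w ∈ ({-1, 0, 1} : Set ℤ),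
      cmod (s * (m + r' -
          cmod (cmod (m + 2 ^ ℓ * r + r' + 2 ^ (ℓ - 1)) (q : ℤ) - 2 ^ (ℓ - 1)) (2 ^ ℓ)))
        (q : ℤ)
        = round ((m : ℚ) / 2 ^ ℓ) + w := by
  have hL : (2 : ℤ) ^ ℓ = 2 * 2 ^ (ℓ - 1) := by rw [← pow_succ']; congr 1; omega
  have hLR : (2 : ℤ) ^ ℓ * 2 ^ (κ - ℓ + lam - 1) = 2 ^ (κ + lam - 1) := by
    rw [← pow_add]; congr 1; omega
  have hlog : (2 : ℤ) ^ (κ + lam + 1) ≤ q := by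
    rw [hκ]; exact_mod_cast Nat.pow_log_le_self 2 (by rintro rfl; simp at hκ)
  have hq : 2 * ((2 : ℤ) ^ (κ - 1) + 2 ^ ℓ * 2 ^ (κ - ℓ + lam - 1)) ≤ q := by
    have hK : (2 : ℤ) ^ (κ - 1) ≤ 2 ^ (κ + lam - 1) := pow_le_pow_right₀ (by norm_num) (by omega)
    have h2 : (2 : ℤ) ^ (κ + lam + 1) = 2 ^ (κ + lam - 1) * 2 * 2 := by
      rw [← pow_succ, ← pow_succ]; congr 1; omega
    linarith
  exact_mod_cast
    exists_truncation_eq_round_add hL (by positivity) hq hs_inv hm1 hm2 hr1 hr2 hr'1 hr'2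

/-- Correctness of the truncation protocol, Lemma 1: Let `q` be an odd
prime, let `λ, ℓ, κ` be positive integers with `κ = ⌊log₂ q⌋ − λ − 1` and `κ > ℓ`, and
let `s` be the unique integer in `[−q/2, q/2)` with `s·2^ℓ ≡ 1 (mod q)`.  Then for all
integers `m ∈ [−2^{κ−1}, 2^{κ−1})`, `r ∈ [−2^{κ−ℓ+λ−1}, 2^{κ−ℓ+λ−1})`, and
`r' ∈ [−2^{ℓ−1}, 2^{ℓ−1})`, setting `m_r := (m + 2^ℓ r + r' + 2^{ℓ−1}) mod q`, there
exists `w ∈ {−1, 0, 1}` such that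
`(s·(m + r' − ((m_r − 2^{ℓ−1}) mod 2^ℓ))) mod q = ⌊m/2^ℓ⌉ + w`,
where all residues are centered residues and `⌊x⌉ = ⌊x + 1/2⌋`. -/
theorem stmt_3 (q : ℕ) (hq : Nat.Prime q) (hodd : Odd q)
    (lam ℓ κ : ℕ) (hlam : 1 ≤ lam) (hℓ : 1 ≤ ℓ) (hκpos : 1 ≤ κ)
    (hκ : κ + lam + 1 = Nat.log 2 q) (hκℓ : ℓ < κ)
    (s : ℤ) (hs_lb : -(q : ℚ) / 2 ≤ (s : ℚ)) (hs_ub : (s : ℚ) < (q : ℚ) / 2)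
    (hs_inv : s * 2 ^ ℓ ≡ 1 [ZMOD (q : ℤ)])
    (m r r' : ℤ)
    (hm1 : -2 ^ (κ - 1) ≤ m) (hm2 : m < 2 ^ (κ - 1))
    (hr1 : -2 ^ (κ - ℓ + lam - 1) ≤ r) (hr2 : r < 2 ^ (κ - ℓ + lam - 1))
    (hr'1 : -2 ^ (ℓ - 1) ≤ r') (hr'2 : r' < 2 ^ (ℓ - 1)) :
    ∃ w ∈ ({-1, 0, 1} : Set ℤ),
      cmod (s * (m + r' -
          cmod (cmod (m + 2 ^ ℓ * r + r' + 2 ^ (ℓ - 1)) (q : ℤ) - 2 ^ (ℓ - 1)) (2 ^ ℓ)))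
        (q : ℤ)
        = round ((m : ℚ) / 2 ^ ℓ) + w :=
  stmt_3_general q lam ℓ κ hlam hℓ hκ hκℓ s hs_inv m r r' hm1 hm2 hr1 hr2 hr'1 hr'2
end

section
/- (Statistical hiding of the truncation mask.) Let κ, λ ≥ 1 be integers and let m be an integer with −2^{κ−1} ≤ m < 2^{κ−1}. Let r'' be a random variable uniformly distributed on the set of integers [−2^{κ+λ−1}, 2^{κ+λ−1}). Then the statistical distance between the distributions of m + r'' and of r'', namely (1/2)·Σ_{x∈ℤ} |Pr[m + r'' = x] − Pr[r'' = x]|, is at most 2^{−λ−1}; in particular it is less than 2^{−λ}. -/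
/-- The (finset) integer interval `[-2^e, 2^e)` is nonempty. -/
theorem pow_Icc_nonempty (e : ℕ) :
    (Finset.Icc (-(2 : ℤ) ^ e) ((2 : ℤ) ^ e - 1)).Nonempty := by
  refine ⟨0, Finset.mem_Icc.mpr ⟨?_, ?_⟩⟩ <;>
    · have h : (0 : ℤ) < 2 ^ e := by positivity
      have h1 : (1 : ℤ) ≤ 2 ^ e := h
      linarith

section aux

variable (e : ℕ) (m : ℤ)

/-- The key computation: the statistical distance sum equals `2|m| / 2^{e+1}`. -/
lemma aux_sum_eq (e : ℕ) (m : ℤ) (hm : |m| ≤ 2 ^ e) :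
    ∑' x : ℤ,
        |(((PMF.uniformOfFinset
              (Finset.Icc (-(2 : ℤ) ^ e) ((2 : ℤ) ^ e - 1))
              (pow_Icc_nonempty _)).map (fun r'' => m + r'')) x).toReal -
          ((PMF.uniformOfFinset
              (Finset.Icc (-(2 : ℤ) ^ e) ((2 : ℤ) ^ e - 1))
              (pow_Icc_nonempty _)) x).toReal|
      = 2 * |(m : ℝ)| * ((2 : ℝ) ^ (e + 1))⁻¹ := by
  set B : ℤ := 2 ^ e with hBdef
  have hB : 0 < B := by positivity
  set I : Finset ℤ := Finset.Icc (-B) (B - 1) with hIdef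
  set A : Finset ℤ := Finset.Icc (-B + m) (B - 1 + m) with hAdef
  set p := PMF.uniformOfFinset I (pow_Icc_nonempty e) with hpdef
  have hcardI : (I.card : ℤ) = 2 * B := by
    rw [hIdef, Int.card_Icc]
    omega
  set c : ℝ := ((I.card : ℝ))⁻¹ with hcdef
  -- pointwise value of p
  have hp : ∀ x : ℤ, (p x).toReal = if x ∈ I then c else 0 := by
    intro x
    rw [hpdef, PMF.uniformOfFinset_apply]
    split_ifs with h
    · simp [hcdef]
    · simp
  -- pointwise value of the mapped PMF
  have hq : ∀ x : ℤ, ((p.map (fun r'' => m + r'')) x).toReal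
      = if x ∈ A then c else 0 := by
    intro x
    rw [PMF.map_apply]
    rw [tsum_eq_single (x - m) (by intro b hb; simp only [ite_eq_right_iff]; intro h; omega)]
    have : x = m + (x - m) := by ring
    rw [if_pos this, hp]
    have hmem : x - m ∈ I ↔ x ∈ A := by
      simp only [hIdef, hAdef, Finset.mem_Icc]; omega
    by_cases h : x ∈ A
    · rw [if_pos (hmem.mpr h), if_pos h]
    · rw [if_neg (fun hh => h (hmem.mp hh)), if_neg h]
  have hc0 : 0 ≤ c := by positivity
  -- the summand
  have hF : ∀ x : ℤ,
      |((p.map (fun r'' => m + r'')) x).toReal - (p x).toReal|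
        = (if x ∈ A then c else 0) + (if x ∈ I then c else 0)
          - 2 * (if x ∈ A ∩ I then c else 0) := by
    intro x
    rw [hq, hp]
    by_cases hA : x ∈ A <;> by_cases hI : x ∈ I <;>
      simp [hA, hI, Finset.mem_inter, abs_of_nonneg hc0, abs_of_nonpos, hc0] <;> ring
  -- reduce the tsum to a finite sum over A ∪ I
  have hsum : ∑' x : ℤ,
      |((p.map (fun r'' => m + r'')) x).toReal - (p x).toReal|
      = ∑ x ∈ A ∪ I,
          ((if x ∈ A then c else 0) + (if x ∈ I then c else 0)
            - 2 * (if x ∈ A ∩ I then c else 0)) := by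
    rw [show (fun x : ℤ => |((p.map (fun r'' => m + r'')) x).toReal - (p x).toReal|)
        = fun x : ℤ => (if x ∈ A then c else 0) + (if x ∈ I then c else 0)
            - 2 * (if x ∈ A ∩ I then c else 0) from funext hF]
    refine tsum_eq_sum ?_
    intro b hb
    have hA : b ∉ A := fun h => hb (Finset.mem_union_left _ h)
    have hI : b ∉ I := fun h => hb (Finset.mem_union_right _ h)
    have hAI : b ∉ A ∩ I := fun h => hA (Finset.mem_inter.mp h).1
    simp [hA, hI, hAI]
  rw [hsum]
  rw [Finset.sum_sub_distrib, Finset.sum_add_distrib]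
  simp only [mul_ite, mul_zero]
  rw [Finset.sum_ite_mem, Finset.sum_ite_mem, Finset.sum_ite_mem]
  rw [Finset.union_inter_cancel_left, Finset.union_inter_cancel_right]
  have hAIinter : (A ∪ I) ∩ (A ∩ I) = A ∩ I := by
    refine Finset.inter_eq_right.mpr ?_
    exact (Finset.inter_subset_left).trans (Finset.subset_union_left)
  rw [hAIinter]
  simp only [Finset.sum_const, nsmul_eq_mul, Finset.mul_sum]
  -- cardinalities
  have hmB : |m| ≤ 2 * B ∨ True := Or.inr trivial
  have hcardA : (A.card : ℤ) = 2 * B := by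
    rw [hAdef, Int.card_Icc]; omega
  have hAI : A ∩ I = Finset.Icc (max (-B + m) (-B)) (min (B - 1 + m) (B - 1)) := by
    ext x
    simp only [Finset.mem_inter, hAdef, hIdef, Finset.mem_Icc, le_max_iff, max_le_iff,
      le_min_iff, min_le_iff]
    omega
  have hcardAI : (((A ∩ I).card : ℤ)) = max (2 * B - |m|) 0 := by
    rw [hAI, Int.card_Icc]
    rcases le_or_gt 0 m with hm | hm
    · rw [max_eq_left (by omega), min_eq_right (by omega), abs_of_nonneg hm]
      omega
    · rw [max_eq_right (by omega), min_eq_left (by omega), abs_of_neg hm]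
      omega
  -- now everything is numeric
  have hcI : (I.card : ℝ) = 2 * (B : ℝ) := by
    exact_mod_cast congrArg (Int.cast : ℤ → ℝ) hcardI
  have hcA : (A.card : ℝ) = 2 * (B : ℝ) := by
    exact_mod_cast congrArg (Int.cast : ℤ → ℝ) hcardA
  have hcAI : ((A ∩ I).card : ℝ) = (max (2 * B - |m|) 0 : ℤ) := by
    exact_mod_cast congrArg (Int.cast : ℤ → ℝ) hcardAI
  rw [hcA, hcI, hcAI]
  have hBr : ((2 : ℝ) ^ (e + 1))⁻¹ = c := by
    rw [hcdef, hcI]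
    congr 1
    rw [hBdef]
    push_cast
    ring
  rw [hBr]
  have h : 0 ≤ 2 * B - |m| := by
    have : |m| ≤ B := hm
    omega
  have hmax : max (2 * B - |m|) 0 = 2 * B - |m| := max_eq_left h
  rw [hmax]
  have habs : |(m : ℝ)| = ((|m| : ℤ) : ℝ) := by rw [Int.cast_abs]
  rw [habs]
  push_cast
  ring

/-- Statistical hiding of the truncation mask: Let `κ, λ ≥ 1` and let
`m` be an integer with `−2^{κ−1} ≤ m < 2^{κ−1}`.  If `r''` is uniformly distributed on
the integer interval `[−2^{κ+λ−1}, 2^{κ+λ−1})`, then the statistical distance between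
the distributions of `m + r''` and of `r''` is at most `2^{−λ−1}`; in particular it is
less than `2^{−λ}`. -/
theorem stmt_7 (κ lam : ℕ) (hκ : 1 ≤ κ) (hlam : 1 ≤ lam)
    (m : ℤ) (hm1 : -2 ^ (κ - 1) ≤ m) (hm2 : m < 2 ^ (κ - 1)) :
    (1 / 2 : ℝ) * ∑' x : ℤ,
        |(((PMF.uniformOfFinset
              (Finset.Icc (-(2 : ℤ) ^ (κ + lam - 1)) ((2 : ℤ) ^ (κ + lam - 1) - 1))
              (pow_Icc_nonempty _)).map (fun r'' => m + r'')) x).toReal -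
          ((PMF.uniformOfFinset
              (Finset.Icc (-(2 : ℤ) ^ (κ + lam - 1)) ((2 : ℤ) ^ (κ + lam - 1) - 1))
              (pow_Icc_nonempty _)) x).toReal|
      ≤ (2 : ℝ) ^ (-(lam : ℤ) - 1) ∧
    (1 / 2 : ℝ) * ∑' x : ℤ,
        |(((PMF.uniformOfFinset
              (Finset.Icc (-(2 : ℤ) ^ (κ + lam - 1)) ((2 : ℤ) ^ (κ + lam - 1) - 1))
              (pow_Icc_nonempty _)).map (fun r'' => m + r'')) x).toReal -
          ((PMF.uniformOfFinset
              (Finset.Icc (-(2 : ℤ) ^ (κ + lam - 1)) ((2 : ℤ) ^ (κ + lam - 1) - 1))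
              (pow_Icc_nonempty _)) x).toReal|
      < (2 : ℝ) ^ (-(lam : ℤ)) := by
  have hm' : |m| ≤ (2 : ℤ) ^ (κ + lam - 1) := by
    have h1 : (2 : ℤ) ^ (κ - 1) ≤ 2 ^ (κ + lam - 1) :=
      pow_le_pow_right₀ (by norm_num) (by omega)
    rw [abs_le]
    exact ⟨by linarith, by linarith⟩
  rw [aux_sum_eq _ _ hm']
  have he : κ + lam - 1 + 1 = κ + lam := by omega
  have hmr : |(m : ℝ)| ≤ (2 : ℝ) ^ (κ - 1) := by
    rw [← Int.cast_abs]
    exact_mod_cast (abs_le.mpr ⟨hm1, hm2.le⟩ : |m| ≤ 2 ^ (κ - 1))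
  have hpow : (2 : ℝ) ^ (κ - 1) * ((2 : ℝ) ^ (κ + lam - 1 + 1))⁻¹
      = (2 : ℝ) ^ (-(lam : ℤ) - 1) := by
    rw [he]
    rw [← zpow_natCast (2 : ℝ) (κ - 1), ← zpow_natCast (2 : ℝ) (κ + lam),
      ← zpow_neg, ← zpow_add₀ (by norm_num : (2 : ℝ) ≠ 0)]
    congr 1
    have : ((κ - 1 : ℕ) : ℤ) = (κ : ℤ) - 1 := by
      exact_mod_cast Int.ofNat_sub hκ
    rw [this]
    push_cast
    ring
  have hinv : (0 : ℝ) < ((2 : ℝ) ^ (κ + lam - 1 + 1))⁻¹ := by positivity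
  have hle : (1 / 2 : ℝ) * (2 * |(m : ℝ)| * ((2 : ℝ) ^ (κ + lam - 1 + 1))⁻¹)
      ≤ (2 : ℝ) ^ (-(lam : ℤ) - 1) := by
    rw [← hpow]
    have : |(m : ℝ)| * ((2 : ℝ) ^ (κ + lam - 1 + 1))⁻¹
        ≤ (2 : ℝ) ^ (κ - 1) * ((2 : ℝ) ^ (κ + lam - 1 + 1))⁻¹ :=
      mul_le_mul_of_nonneg_right hmr hinv.le
    linarith
  have hlt : (2 : ℝ) ^ (-(lam : ℤ) - 1) < (2 : ℝ) ^ (-(lam : ℤ)) := by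
    have h1 : (2 : ℝ) ^ (-(lam : ℤ) - 1) = (2 : ℝ) ^ (-(lam : ℤ)) * 2⁻¹ := by
      rw [sub_eq_add_neg, zpow_add₀ (by norm_num : (2 : ℝ) ≠ 0)]
      norm_num
    have h2 : (0 : ℝ) < (2 : ℝ) ^ (-(lam : ℤ)) := by positivity
    rw [h1]
    linarith
  exact ⟨hle, lt_of_le_of_lt hle hlt⟩
end aux
end

section
/- (Perturbation norm bound.) Let Φ ∈ ℝ^{N×N}, Γ ∈ ℝ^{N×p}, Ξ ∈ ℝ^{N×n} with ‖Ξ‖ ≤ 1, and suppose there exist c ≥ 1 and γ ∈ (0,1) such that ‖Φ^t‖ ≤ c γ^t for all t ∈ ℕ, where ‖·‖ is the induced 2-norm. Let ℓ ≥ 1 and let d₁ : ℕ → ℝ^p, d₂ : ℕ → ℝ^n satisfy ‖d₁(t)‖ ≤ 2^{−ℓ−1}√p and ‖d₂(t)‖ ≤ (3/2)·2^{−ℓ}√n for all t. If ε(0) = 0 and ε(t+1) = Φ ε(t) − Γ d₁(t) − Ξ d₂(t), then for all t ∈ ℕ: ‖ε(t)‖ < 2^{−ℓ} ((√p/2)·‖Γ‖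 + 2√n)·c/(1 − γ). -/
/-! Unrolling the recurrence gives the variation-of-constants formula
`ε(t) = ∑_{k<t} Φ^k w(t-1-k)` with `w = -Γ d₁ - Ξ d₂`, and exponential stability bounds it by the
geometric series `∑ c γ^k ≤ c/(1-γ)` times the per-step bound
`‖Γ‖ 2^{-ℓ-1} √p + (3/2) 2^{-ℓ} √n` on `‖w‖`. That bound is strictly below
`2^{-ℓ} ((√p/2)‖Γ‖ + 2√n)` because `3/2 < 2` and `n ≥ 1`. -/

open scoped Matrix.Norms.L2Operator

/-- The Euclidean (`ℓ²`) norm of a finitely-indexed real vector. -/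
noncomputable def e2norm {ι : Type*} [Fintype ι] (v : ι → ℝ) : ℝ :=
  ‖(WithLp.equiv 2 (ι → ℝ)).symm v‖

section LinearRecurrence

variable {𝕜 E : Type*} [NontriviallyNormedField 𝕜] [NormedAddCommGroup E] [NormedSpace 𝕜 E]

theorem eq_sum_pow_apply_of_succ_eq (A : E →L[𝕜] E) (w x : ℕ → E) (hx0 : x 0 = 0)
    (hx : ∀ t, x (t + 1) = A (x t) + w t) (t : ℕ) :
    x t = ∑ k ∈ Finset.range t, (A ^ k) (w (t - 1 - k)) := by
  induction t with
  | zero => simp [hx0]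
  | succ t ih =>
    rw [hx, ih, Finset.sum_range_succ', map_sum]
    simp only [pow_succ', mul_apply_eq_comp, pow_zero,
      one_apply_eq_self, Nat.add_sub_cancel, Nat.sub_zero]
    congr 2 with k
    rw [Nat.sub_sub, add_comm 1 k]

theorem norm_le_of_succ_eq_of_norm_pow_le (A : E →L[𝕜] E) (w x : ℕ → E) (hx0 : x 0 = 0)
    (hx : ∀ t, x (t + 1) = A (x t) + w t) {c γ M : ℝ} (hγ0 : 0 ≤ γ) (hγ1 : γ < 1)
    (hA : ∀ k, ‖A ^ k‖ ≤ c * γ ^ k) (hw : ∀ t, ‖w t‖ ≤ M) (t : ℕ) :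
    ‖x t‖ ≤ c / (1 - γ) * M := by
  have hc : 0 ≤ c := by simpa using (norm_nonneg _).trans (hA 0)
  have hM : 0 ≤ M := (norm_nonneg _).trans (hw 0)
  have hgeom : ∑ k ∈ Finset.range t, γ ^ k ≤ 1 / (1 - γ) := by
    simpa using geom_sum_Ico_le_of_lt_one (m := 0) (n := t) hγ0 hγ1
  calc ‖x t‖ ≤ ∑ k ∈ Finset.range t, ‖(A ^ k) (w (t - 1 - k))‖ := by
        rw [eq_sum_pow_apply_of_succ_eq A w x hx0 hx t]
        exact norm_sum_le _ _
    _ ≤ ∑ k ∈ Finset.range t, c * γ ^ k * M := by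
        gcongr with k
        exact (A ^ k).le_of_opNorm_le (hA k) _ |>.trans (by gcongr; exact hw _)
    _ = c * M * ∑ k ∈ Finset.range t, γ ^ k := by
        rw [Finset.mul_sum]; exact Finset.sum_congr rfl fun _ _ => by ring
    _ ≤ c * M * (1 / (1 - γ)) := by gcongr
    _ = c / (1 - γ) * M := by ring

end LinearRecurrence

theorem e2norm_mulVec_le {m n : Type*} [Fintype m] [Fintype n] [DecidableEq n] (A : Matrix m n ℝ)
    (v : n → ℝ) : e2norm (A.mulVec v) ≤ ‖A‖ * e2norm v :=
  A.l2_opNorm_mulVec (WithLp.toLp 2 v)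

theorem stmt_11_general (N p n : ℕ) (hn : 1 ≤ n)
    (Φ : Matrix (Fin N) (Fin N) ℝ) (Γ : Matrix (Fin N) (Fin p) ℝ)
    (Ξ : Matrix (Fin N) (Fin n) ℝ) (hΞ : ‖Ξ‖ ≤ 1)
    (c γ : ℝ) (hc : 1 ≤ c) (hγ0 : 0 < γ) (hγ1 : γ < 1)
    (hΦ : ∀ t : ℕ, ‖Φ ^ t‖ ≤ c * γ ^ t)
    (ℓ : ℕ)
    (d₁ : ℕ → Fin p → ℝ) (d₂ : ℕ → Fin n → ℝ)
    (hd₁ : ∀ t : ℕ, e2norm (d₁ t) ≤ (2 : ℝ) ^ (-(ℓ : ℤ) - 1) * Real.sqrt p)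
    (hd₂ : ∀ t : ℕ, e2norm (d₂ t) ≤ (3 / 2) * (2 : ℝ) ^ (-(ℓ : ℤ)) * Real.sqrt n)
    (ε : ℕ → Fin N → ℝ) (hε0 : ε 0 = 0)
    (hεrec : ∀ t : ℕ,
      ε (t + 1) = Φ.mulVec (ε t) - Γ.mulVec (d₁ t) - Ξ.mulVec (d₂ t)) :
    ∀ t : ℕ, e2norm (ε t) <
      (2 : ℝ) ^ (-(ℓ : ℤ)) * ((Real.sqrt p / 2) * ‖Γ‖ + 2 * Real.sqrt n) *
        (c / (1 - γ)) := by
  intro t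
  set u : ℝ := (2 : ℝ) ^ (-(ℓ : ℤ))
  set w : ℕ → Fin N → ℝ := fun t => -(Γ.mulVec (d₁ t)) - Ξ.mulVec (d₂ t)
  have hw : ∀ t, e2norm (w t) ≤ ‖Γ‖ * (u / 2 * √p) + 3 / 2 * u * √n := fun t =>
    calc e2norm (w t) ≤ e2norm (Γ.mulVec (d₁ t)) + e2norm (Ξ.mulVec (d₂ t)) := by
          simpa [e2norm, w, sub_eq_add_neg] using
            norm_sub_le (-WithLp.toLp 2 (Γ.mulVec (d₁ t))) (WithLp.toLp 2 (Ξ.mulVec (d₂ t)))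
      _ ≤ ‖Γ‖ * e2norm (d₁ t) + e2norm (d₂ t) := by
          gcongr
          · exact e2norm_mulVec_le Γ (d₁ t)
          · exact (e2norm_mulVec_le Ξ (d₂ t)).trans
              (mul_le_of_le_one_left (norm_nonneg _) hΞ)
      _ ≤ ‖Γ‖ * (u / 2 * √p) + 3 / 2 * u * √n := by
          have hu2 : (2 : ℝ) ^ (-(ℓ : ℤ) - 1) = u / 2 := by
            rw [zpow_sub_one₀ two_ne_zero]; ring
          rw [← hu2]
          gcongr
          exacts [hd₁ t, hd₂ t]
  have hbound := norm_le_of_succ_eq_of_norm_pow_le (Matrix.toEuclideanCLM (𝕜 := ℝ) Φ)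
    (fun t => WithLp.toLp 2 (w t)) (fun t => WithLp.toLp 2 (ε t)) (by simp [hε0])
    (fun t => by simp [hεrec, w, sub_eq_add_neg, add_assoc]) hγ0.le hγ1
    (fun k => by rw [← map_pow, Matrix.l2_opNorm_toEuclideanCLM]; exact hΦ k) hw t
  have hn' : (0 : ℝ) < √n := Real.sqrt_pos.mpr (by exact_mod_cast hn)
  have hu : 0 < u := by positivity
  refine hbound.trans_lt ?_
  rw [mul_comm _ (c / (1 - γ))]
  gcongr
  nlinarith [mul_pos hu hn']

/-- Perturbation norm bound: Suppose `‖Ξ‖ ≤ 1`, `‖Φ^t‖ ≤ c γ^t` with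
`c ≥ 1`, `γ ∈ (0,1)` (induced 2-norms), `‖d₁(t)‖ ≤ 2^{−ℓ−1}√p`,
`‖d₂(t)‖ ≤ (3/2)·2^{−ℓ}√n`, `ε(0) = 0`, and
`ε(t+1) = Φ ε(t) − Γ d₁(t) − Ξ d₂(t)`.  Then for all `t`,
`‖ε(t)‖ < 2^{−ℓ} ((√p/2)·‖Γ‖ + 2√n)·c/(1 − γ)`. -/
theorem stmt_11 (N p n : ℕ) (hN : 1 ≤ N) (hp : 1 ≤ p) (hn : 1 ≤ n)
    (Φ : Matrix (Fin N) (Fin N) ℝ) (Γ : Matrix (Fin N) (Fin p) ℝ)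
    (Ξ : Matrix (Fin N) (Fin n) ℝ) (hΞ : ‖Ξ‖ ≤ 1)
    (c γ : ℝ) (hc : 1 ≤ c) (hγ0 : 0 < γ) (hγ1 : γ < 1)
    (hΦ : ∀ t : ℕ, ‖Φ ^ t‖ ≤ c * γ ^ t)
    (ℓ : ℕ) (hℓ : 1 ≤ ℓ)
    (d₁ : ℕ → Fin p → ℝ) (d₂ : ℕ → Fin n → ℝ)
    (hd₁ : ∀ t : ℕ, e2norm (d₁ t) ≤ (2 : ℝ) ^ (-(ℓ : ℤ) - 1) * Real.sqrt p)
    (hd₂ : ∀ t : ℕ, e2norm (d₂ t) ≤ (3 / 2) * (2 : ℝ) ^ (-(ℓ : ℤ)) * Real.sqrt n)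
    (ε : ℕ → Fin N → ℝ) (hε0 : ε 0 = 0)
    (hεrec : ∀ t : ℕ,
      ε (t + 1) = Φ.mulVec (ε t) - Γ.mulVec (d₁ t) - Ξ.mulVec (d₂ t)) :
    ∀ t : ℕ, e2norm (ε t) <
      (2 : ℝ) ^ (-(ℓ : ℤ)) * ((Real.sqrt p / 2) * ‖Γ‖ + 2 * Real.sqrt n) *
        (c / (1 - γ)) :=
  stmt_11_general N p n hn Φ Γ Ξ hΞ c γ hc hγ0 hγ1 hΦ ℓ d₁ d₂ hd₁ hd₂ ε hε0 hεrec
end
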